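/- arXiv:2401.15571 — 5 statements merged into one kernel-verified Lean document; each statement's English description precedes it below -/
import Mathlib

section
/- For any a₁, a₂ ∈ F_{2^r} with a₁ ≠ a₂, and any b₁, b₂ ∈ F_{2^n}, the inner product of the vectors B_{a₁,b₁} and B_{a₂,b₂} in ℝ^(F_{2^n}) has absolute value exactly 1/2^m, i.e. |⟨B_{a₁,b₁}, B_{a₂,b₂}⟩| = 1/2^m. -/
noncomputable section

/-- The relative trace `Tr_k^l` from `F_{2^l}` to `F_{2^k}`, written as a function on an
ambient field of characteristic two: `x ↦ x + x^(2^k) + x^(2^(2k)) + ⋯ + x^(2^(l-k))`. -/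
def relTr {F : Type*} [Field F] (k l : ℕ) (x : F) : F :=
  ∑ i ∈ Finset.range (l / k), x ^ 2 ^ (k * i)

/-- `(-1)^y` for `y ∈ F_2 ⊆ F`, identifying `F_2` with `{0,1}`. -/
def sgn {F : Type*} [Field F] [DecidableEq F] (y : F) : ℝ :=
  if y = 0 then 1 else -1

/-- The vector `B_{a,b} ∈ ℝ^F`, whose `x`-th coordinate is
`(1/2^m)·(-1)^(Tr_1^m(a·x^(2^m+1)) + Tr_1^n(b·x))`. -/
def Bvec {F : Type*} [Field F] [DecidableEq F] (m n : ℕ) (a b : F) : F → ℝ :=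
  fun x => (1 / 2 ^ m : ℝ) * sgn (relTr 1 m (a * x ^ (2 ^ m + 1)) + relTr 1 n (b * x))

section aux
variable {F : Type*} [Field F]

/-- auxiliary: `Tr_1^l` written plainly. -/
def myTr (l : ℕ) (x : F) : F := ∑ i ∈ Finset.range l, x ^ 2 ^ i

lemma relTr_one (l : ℕ) (x : F) : relTr 1 l x = myTr l x := by
  simp [relTr, myTr]

lemma myTr_zero (l : ℕ) : myTr l (0 : F) = 0 := by
  simp [myTr]

variable [CharP F 2]

lemma myTr_add (l : ℕ) (x y : F) : myTr l (x + y) = myTr l x + myTr l y := by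
  simp [myTr, add_pow_char_pow, Finset.sum_add_distrib]

lemma myTr_sq (l : ℕ) (x : F) (hx : x ^ 2 ^ l = x) : myTr l x * myTr l x = myTr l x := by
  have h2 : (myTr l x) ^ 2 = ∑ i ∈ Finset.range l, x ^ 2 ^ (i + 1) := by
    rw [myTr, sum_pow_char]
    congr 1; ext i
    rw [← pow_mul, pow_succ, mul_comm (2^i) 2]
  have h3 : ∑ i ∈ Finset.range l, x ^ 2 ^ (i + 1) = myTr l x := by
    have := Finset.sum_range_succ' (fun i => x ^ 2 ^ i) l
    rw [Finset.sum_range_succ] at this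
    have h4 : myTr l x + x ^ 2 ^ l =
        (∑ i ∈ Finset.range l, x ^ 2 ^ (i + 1)) + x ^ 2 ^ 0 := this
    rw [hx, pow_zero, pow_one] at h4
    exact add_right_cancel h4 |>.symm
  rw [← sq, h2, h3]

lemma myTr_mem (l : ℕ) (x : F) (hx : x ^ 2 ^ l = x) : myTr l x = 0 ∨ myTr l x = 1 := by
  have h := myTr_sq l x hx
  have h0 : myTr l x * (myTr l x - 1) = 0 := by linear_combination h
  rcases mul_eq_zero.mp h0 with h1 | h1
  · exact Or.inl h1
  · exact Or.inr (by linear_combination h1)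

lemma myTr_split (m : ℕ) (z : F) : myTr (m + m) z = myTr m z + myTr m (z ^ 2 ^ m) := by
  rw [myTr, Finset.sum_range_add]
  congr 1
  simp only [myTr]
  apply Finset.sum_congr rfl
  intro i _
  rw [← pow_mul, ← pow_add]

/-- `{0,1}` is closed under addition in characteristic two. -/
lemma mem01_add {y z : F} (hy : y = 0 ∨ y = 1) (hz : z = 0 ∨ z = 1) :
    y + z = 0 ∨ y + z = 1 := by
  rcases hy with rfl | rfl <;> rcases hz with rfl | rfl <;>
    simp [CharTwo.add_self_eq_zero]

end aux

section finite
variable {F : Type*} [Field F] [Fintype F] [DecidableEq F] [CharP F 2] {n : ℕ}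

omit [Fintype F] in
lemma sgn_add (y z : F) (hy : y = 0 ∨ y = 1) (hz : z = 0 ∨ z = 1) :
    sgn (y + z) = sgn y * sgn z := by
  rcases hy with rfl | rfl <;> rcases hz with rfl | rfl <;>
    simp [sgn, CharTwo.add_self_eq_zero, one_ne_zero]

lemma myTr_exists_one (hn0 : 0 < n) (hF : Fintype.card F = 2 ^ n) :
    ∃ w : F, myTr n w = 1 := by
  by_contra hcon
  push_neg at hcon
  have hall : ∀ w : F, myTr n w = 0 := by
    intro w
    have hw : w ^ 2 ^ n = w := by rw [← hF]; exact FiniteField.pow_card w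
    rcases myTr_mem n w hw with h | h
    · exact h
    · exact absurd h (hcon w)
  set p : Polynomial F := ∑ i ∈ Finset.range n, Polynomial.X ^ 2 ^ i with hp
  have heval : ∀ w : F, p.eval w = 0 := by
    intro w
    have := hall w
    rw [myTr] at this
    rw [hp]
    simpa [Polynomial.eval_finset_sum] using this
  have hdeg : p.natDegree < Fintype.card F := by
    rw [hF]
    calc p.natDegree ≤ 2 ^ (n - 1) := by
          apply Polynomial.natDegree_sum_le_of_forall_le
          intro i hi
          simp only [Polynomial.natDegree_X_pow]
          exact Nat.pow_le_pow_right (by norm_num) (Nat.le_pred_of_lt (Finset.mem_range.mp hi))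
      _ < 2 ^ n := Nat.pow_lt_pow_right one_lt_two (Nat.pred_lt hn0.ne')
  have hp0 : p = 0 := by
    apply Polynomial.eq_zero_of_natDegree_lt_card_of_eval_eq_zero' p Finset.univ
      (fun w _ => heval w)
    simpa [Finset.card_univ] using hdeg
  have hc1 : p.coeff 1 = 1 := by
    rw [hp, Polynomial.finset_sum_coeff, Finset.sum_eq_single 0]
    · simp
    · intro i _ hi
      have : (1 : ℕ) ≠ 2 ^ i := by
        have := Nat.one_lt_two_pow_iff.mpr hi
        omega
      simp [Polynomial.coeff_X_pow, this]
    · intro h; exact absurd (Finset.mem_range.mpr hn0) h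
  rw [hp0] at hc1
  simp at hc1

lemma charSum (hn0 : 0 < n) (hF : Fintype.card F = 2 ^ n) (c : F) :
    ∑ w : F, sgn (myTr n (c * w)) = if c = 0 then (2 ^ n : ℝ) else 0 := by
  split_ifs with hc
  · subst hc
    simp [myTr_zero, sgn, Finset.card_univ, hF]
  · obtain ⟨w₀, hw₀⟩ := myTr_exists_one hn0 hF (F := F)
    set u₀ := c⁻¹ * w₀ with hu
    have key : ∀ w : F, sgn (myTr n (c * (w + u₀))) = - sgn (myTr n (c * w)) := by
      intro w
      have h1 : c * (w + u₀) = c * w + w₀ := by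
        rw [mul_add, hu, ← mul_assoc, mul_inv_cancel₀ hc, one_mul]
      have hcw : (c * w) ^ 2 ^ n = c * w := by rw [← hF]; exact FiniteField.pow_card _
      rw [h1, myTr_add, hw₀]
      rcases myTr_mem n (c * w) hcw with h | h <;> rw [h] <;>
        simp [sgn, one_ne_zero, CharTwo.add_self_eq_zero]
    have hbij : ∑ w : F, sgn (myTr n (c * (w + u₀))) = ∑ w : F, sgn (myTr n (c * w)) :=
      Fintype.sum_equiv (Equiv.addRight u₀) _ _ (fun w => rfl)
    have h2 : ∑ w : F, sgn (myTr n (c * (w + u₀))) = -∑ w : F, sgn (myTr n (c * w)) := by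
      simp [key]
    linarith [hbij, h2]
end finite

theorem stmt2 (t r : ℕ) (ht : 0 < t) (hr : 0 < r) (m n : ℕ) (hm : m = t * r)
    (hn : n = 2 * m) (F : Type*) [Field F] [Fintype F] [DecidableEq F]
    (hF : Fintype.card F = 2 ^ n)
    (a₁ a₂ : F) (ha₁ : a₁ ^ 2 ^ r = a₁) (ha₂ : a₂ ^ 2 ^ r = a₂) (hne : a₁ ≠ a₂)
    (b₁ b₂ : F) :
    |∑ x : F, Bvec m n a₁ b₁ x * Bvec m n a₂ b₂ x| = 1 / 2 ^ m := by
  -- basic numerics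
  have hm0 : 0 < m := hm ▸ Nat.mul_pos ht hr
  have hn0 : 0 < n := by omega
  -- characteristic 2
  haveI hchar : CharP F 2 := by
    obtain ⟨p, hp⟩ := CharP.exists F
    haveI := hp
    obtain ⟨k, hkp, hk⟩ := FiniteField.card F p
    have hp2 : p = 2 := by
      have hdvd : p ∣ 2 ^ n := by
        rw [← hF, hk]
        exact dvd_pow_self p (by exact_mod_cast k.pos.ne')
      have := hkp.dvd_of_dvd_pow hdvd
      exact (Nat.prime_dvd_prime_iff_eq hkp Nat.prime_two).mp this
    rw [hp2] at hp; exact hp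
  have h2F : (2 : F) = 0 := CharTwo.two_eq_zero
  -- Frobenius facts
  have pc : ∀ x : F, x ^ 2 ^ n = x := by
    intro x; rw [← hF]; exact FiniteField.pow_card x
  have hq2 : ∀ x : F, (x ^ 2 ^ m) ^ 2 ^ m = x := by
    intro x
    rw [← pow_mul, ← pow_add, show m + m = n by omega]
    exact pc x
  -- r-fixed elements are m-fixed
  have hiter : ∀ c : F, c ^ 2 ^ r = c → c ^ 2 ^ m = c := by
    intro c hc
    have : ∀ k : ℕ, c ^ 2 ^ (k * r) = c := by
      intro k
      induction k with
      | zero => simp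
      | succ k ih =>
          have he : (k + 1) * r = k * r + r := by ring
          rw [he, pow_add, pow_mul, ih, hc]
    rw [hm]; exact this t
  -- the difference parameters
  set a := a₁ + a₂ with hadef
  set b := b₁ + b₂ with hbdef
  have ha : a ≠ 0 := by
    intro h
    apply hne
    have : a₁ + (a₂ + a₂) = 0 + a₂ := by rw [← add_assoc, ← hadef, h]
    simpa [CharTwo.add_self_eq_zero] using this
  have ham : a ^ 2 ^ m = a := by
    apply hiter
    rw [hadef, add_pow_char_pow, ha₁, ha₂]
  have ha1m : a₁ ^ 2 ^ m = a₁ := hiter a₁ ha₁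
  have ha2m : a₂ ^ 2 ^ m = a₂ := hiter a₂ ha₂
  -- fixedness of the norm values
  have hNfix : ∀ x : F, (x ^ (2 ^ m + 1)) ^ 2 ^ m = x ^ (2 ^ m + 1) := by
    intro x
    rw [← pow_mul]
    have he : (2 ^ m + 1) * 2 ^ m = 2 ^ m * 2 ^ m + 2 ^ m := by ring
    rw [he, pow_add, pow_mul, hq2 x]
    ring
  -- membership lemmas
  have hTmMem : ∀ (c : F), c ^ 2 ^ m = c → ∀ x : F,
      myTr m (c * x ^ (2 ^ m + 1)) = 0 ∨ myTr m (c * x ^ (2 ^ m + 1)) = 1 := by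
    intro c hc x
    apply myTr_mem
    rw [mul_pow, hc, hNfix]
  have hTnMem : ∀ y : F, myTr n y = 0 ∨ myTr n y = 1 := fun y => myTr_mem n y (pc y)
  -- the combined function
  set G : F → F := fun x => myTr m (a * x ^ (2 ^ m + 1)) + myTr n (b * x) with hGdef
  have hGmem : ∀ x : F, G x = 0 ∨ G x = 1 := by
    intro x
    exact mem01_add (hTmMem a ham x) (hTnMem _)
  have hG0 : G 0 = 0 := by
    have h0 : (0 : F) ^ (2 ^ m + 1) = 0 := zero_pow (by positivity)
    simp [hGdef, h0, myTr_zero]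
  -- the key quadratic identity
  have key : ∀ x u : F, G x + G (x + u) = G u + myTr n (a * u * x ^ 2 ^ m) := by
    intro x u
    have hexp : (x + u) ^ (2 ^ m + 1)
        = x ^ (2 ^ m + 1) + (x ^ 2 ^ m * u + u ^ 2 ^ m * x + u ^ (2 ^ m + 1)) := by
      rw [pow_succ, add_pow_char_pow]
      ring
    have hz : (a * u * x ^ 2 ^ m) ^ 2 ^ m = a * (u ^ 2 ^ m * x) := by
      rw [mul_pow, mul_pow, ham, hq2 x]
      ring
    have hsplit : myTr m (a * (x ^ 2 ^ m * u)) + myTr m (a * (u ^ 2 ^ m * x))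
        = myTr n (a * u * x ^ 2 ^ m) := by
      have hs := myTr_split m (a * u * x ^ 2 ^ m)
      rw [hz, show m + m = n by omega] at hs
      rw [hs]
      have : a * (x ^ 2 ^ m * u) = a * u * x ^ 2 ^ m := by ring
      rw [this]
    simp only [hGdef]
    rw [hexp]
    have e2 : a * (x ^ (2 ^ m + 1) + (x ^ 2 ^ m * u + u ^ 2 ^ m * x + u ^ (2 ^ m + 1)))
        = a * x ^ (2 ^ m + 1) + (a * (x ^ 2 ^ m * u) + (a * (u ^ 2 ^ m * x)
          + a * u ^ (2 ^ m + 1))) := by ring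
    rw [e2, myTr_add, myTr_add, myTr_add, mul_add b x u, myTr_add]
    linear_combination hsplit + (myTr m (a * x ^ (2 ^ m + 1)) + myTr n (b * x)) * h2F
  -- the exponential sum
  set S : ℝ := ∑ x : F, sgn (G x) with hSdef
  have hSS : S * S = (2 : ℝ) ^ n := by
    rw [hSdef, Fintype.sum_mul_sum]
    have step1 : ∀ x : F, ∑ y : F, sgn (G x) * sgn (G y)
        = ∑ u : F, sgn (G u) * sgn (myTr n (a * u * x ^ 2 ^ m)) := by
      intro x
      have h1 : ∑ y : F, sgn (G x) * sgn (G y)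
          = ∑ u : F, sgn (G x) * sgn (G (x + u)) :=
        Fintype.sum_equiv (Equiv.addLeft x) _ _ (fun u => by simp [← add_assoc, CharTwo.add_self_eq_zero])
      rw [h1]
      apply Finset.sum_congr rfl
      intro u _
      rw [← sgn_add _ _ (hGmem x) (hGmem (x + u)), key x u,
        sgn_add _ _ (hGmem u) (hTnMem _)]
    rw [Finset.sum_congr rfl (fun x _ => step1 x), Finset.sum_comm]
    have step2 : ∀ u : F, ∑ x : F, sgn (G u) * sgn (myTr n (a * u * x ^ 2 ^ m))
        = sgn (G u) * (if a * u = 0 then (2 : ℝ) ^ n else 0) := by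
      intro u
      rw [← Finset.mul_sum]
      congr 1
      have hb : ∑ x : F, sgn (myTr n (a * u * x ^ 2 ^ m))
          = ∑ w : F, sgn (myTr n (a * u * w)) := by
        exact Fintype.sum_bijective (fun x : F => x ^ 2 ^ m)
          (Function.Involutive.bijective hq2)
          (fun x => sgn (myTr n (a * u * x ^ 2 ^ m)))
          (fun w => sgn (myTr n (a * u * w))) (fun x => rfl)
      rw [hb]
      exact charSum hn0 hF (a * u)
    rw [Finset.sum_congr rfl (fun u _ => step2 u)]
    have step3 : ∀ u : F, sgn (G u) * (if a * u = 0 then (2 : ℝ) ^ n else 0)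
        = if u = 0 then sgn (G u) * (2 : ℝ) ^ n else 0 := by
      intro u
      by_cases hu : u = 0
      · simp [hu, ha]
      · simp [hu, mul_eq_zero, ha]
    rw [Finset.sum_congr rfl (fun u _ => step3 u), Finset.sum_ite_eq' Finset.univ 0]
    simp [hG0, sgn]
  -- |S| = 2^m
  have hSabs : |S| = (2 : ℝ) ^ m := by
    have h1 : S ^ 2 = ((2 : ℝ) ^ m) ^ 2 := by
      rw [sq, hSS, ← pow_mul]
      congr 1
      omega
    have h2 : |S| = Real.sqrt (S ^ 2) := by rw [Real.sqrt_sq_eq_abs]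
    rw [h2, h1, Real.sqrt_sq (by positivity)]
  -- reduce the inner product to S
  have hIP : ∑ x : F, Bvec m n a₁ b₁ x * Bvec m n a₂ b₂ x
      = ((1 : ℝ) / 2 ^ m) ^ 2 * S := by
    rw [hSdef, Finset.mul_sum]
    apply Finset.sum_congr rfl
    intro x _
    rw [Bvec, Bvec]
    simp only [relTr_one]
    have hsum : myTr m (a₁ * x ^ (2 ^ m + 1)) + myTr n (b₁ * x)
        + (myTr m (a₂ * x ^ (2 ^ m + 1)) + myTr n (b₂ * x)) = G x := by
      simp only [hGdef, hadef, hbdef, add_mul, myTr_add]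
      ring
    have hmul : sgn (myTr m (a₁ * x ^ (2 ^ m + 1)) + myTr n (b₁ * x)) *
        sgn (myTr m (a₂ * x ^ (2 ^ m + 1)) + myTr n (b₂ * x)) = sgn (G x) := by
      rw [← sgn_add _ _ (mem01_add (hTmMem a₁ ha1m x) (hTnMem _))
        (mem01_add (hTmMem a₂ ha2m x) (hTnMem _)), hsum]
    rw [← hmul]
    ring
  rw [hIP, abs_mul, hSabs, abs_of_pos (by positivity : (0:ℝ) < ((1:ℝ)/2^m)^2)]
  have h2m : (2 : ℝ) ^ m ≠ 0 := by positivity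
  field_simp
end
end

section
/- The set S = {x ∈ F_{2^n} : Tr_r^m(x^{2^m+1}) = 0 and x + x^{2^m} ∈ F_{2^r}} has cardinality exactly 2^(m-r). -/
noncomputable section

/-- The standard basis vector `e_x` of `ℝ^F`. -/
def evec {F : Type*} [DecidableEq F] (x : F) : F → ℝ :=
  fun y => if y = x then 1 else 0

/-- The set `S = {x ∈ F_{2^n} : Tr_r^m(x^(2^m+1)) = 0 and x + x^(2^m) ∈ F_{2^r}}`. -/
def Sset {F : Type*} [Field F] (r m : ℕ) : Set F :=
  {x | relTr r m (x ^ (2 ^ m + 1)) = 0 ∧ (x + x ^ 2 ^ m) ^ 2 ^ r = x + x ^ 2 ^ m}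

namespace Stmt6Aux

open Polynomial Finset

variable {F : Type*} [Field F]

lemma pow_pow (x : F) (a b : ℕ) : (x ^ 2 ^ a) ^ 2 ^ b = x ^ 2 ^ (a + b) := by
  rw [← pow_mul, ← pow_add]

/-- bound on number of roots -/
lemma card_isRoot_le (p : Polynomial F) (hp : p ≠ 0) :
    {x : F | Polynomial.eval x p = 0}.ncard ≤ p.natDegree := by
  classical
  have h : {x : F | Polynomial.eval x p = 0} = ↑p.roots.toFinset := by
    ext x
    simp [Multiset.mem_toFinset, Polynomial.mem_roots hp, Polynomial.IsRoot]
  rw [h, Set.ncard_coe_finset]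
  exact le_trans (Multiset.toFinset_card_le _) (Polynomial.card_roots' p)

lemma card_pow_eq_le (e : ℕ) (he : 2 ≤ e) : {x : F | x ^ e = x}.ncard ≤ e := by
  classical
  have hne : (X ^ e - X : F[X]) ≠ 0 := by
    intro h0
    have h1 : (X ^ e : F[X]) = X := sub_eq_zero.mp h0
    have := congrArg Polynomial.natDegree h1
    rw [Polynomial.natDegree_X_pow, Polynomial.natDegree_X] at this
    omega
  have hset : {x : F | x ^ e = x} = {x : F | Polynomial.eval x (X ^ e - X) = 0} := by
    ext x; simp [sub_eq_zero]
  have hdeg : (X ^ e - X : F[X]).natDegree ≤ e := by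
    refine le_trans (Polynomial.natDegree_sub_le _ _) ?_
    simp [Polynomial.natDegree_X_pow, Polynomial.natDegree_X]
    omega
  rw [hset]
  exact le_trans (card_isRoot_le _ hne) hdeg

lemma card_trroots_le (r t : ℕ) (hr : 0 < r) (ht : 0 < t) :
    {x : F | ∑ i ∈ Finset.range t, x ^ 2 ^ (r * i) = 0}.ncard ≤ 2 ^ (r * (t - 1)) := by
  classical
  set P : F[X] := ∑ i ∈ Finset.range t, X ^ 2 ^ (r * i) with hP
  have heval : ∀ x : F, Polynomial.eval x P = ∑ i ∈ Finset.range t, x ^ 2 ^ (r * i) := by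
    intro x; simp [hP, Polynomial.eval_finset_sum]
  have hne : P ≠ 0 := by
    intro h0
    have hco := congrArg (fun q => Polynomial.coeff q (2 ^ (r * (t - 1)))) h0
    simp only [hP, Polynomial.finset_sum_coeff, Polynomial.coeff_X_pow,
      Polynomial.coeff_zero] at hco
    have hinj : ∀ i ∈ Finset.range t, (2 ^ (r * (t - 1)) = 2 ^ (r * i)) ↔ i = t - 1 := by
      intro i _
      constructor
      · intro h
        have := Nat.pow_right_injective (le_refl 2) h.symm
        exact Nat.eq_of_mul_eq_mul_left hr this
      · intro h; rw [h]
    rw [Finset.sum_congr rfl (fun i hi => by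
      rw [show ((if 2 ^ (r * (t - 1)) = 2 ^ (r * i) then (1:F) else 0)
        = if i = t - 1 then (1:F) else 0) from by
          by_cases h : i = t - 1
          · simp [h]
          · rw [if_neg h, if_neg (fun hc => h ((hinj i hi).mp hc))]])] at hco
    rw [Finset.sum_ite_eq' (Finset.range t) (t - 1) (fun _ => (1:F))] at hco
    rw [if_pos (Finset.mem_range.mpr (by omega))] at hco
    exact one_ne_zero hco
  have hdeg : P.natDegree ≤ 2 ^ (r * (t - 1)) := by
    refine Polynomial.natDegree_sum_le_of_forall_le _ _ ?_
    intro i hi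
    rw [Polynomial.natDegree_X_pow]
    exact Nat.pow_le_pow_right (by norm_num) (Nat.mul_le_mul_left r (by
      have := Finset.mem_range.mp hi; omega))
  have hset : {x : F | ∑ i ∈ Finset.range t, x ^ 2 ^ (r * i) = 0}
      = {x : F | Polynomial.eval x P = 0} := by
    ext x; simp [heval]
  rw [hset]
  exact le_trans (card_isRoot_le _ hne) hdeg

section CharTwoLemmas

variable [CharP F 2]

lemma add_eq_zero_iff (a b : F) : a + b = 0 ↔ a = b := by
  constructor
  · intro h
    have h2 : a = -b := eq_neg_of_add_eq_zero_left h
    rwa [CharTwo.neg_eq] at h2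
  · intro h; rw [h, CharTwo.add_self_eq_zero]

lemma fixed_pow_mul (c : F) (k : ℕ) (hc : c ^ 2 ^ k = c) : ∀ i, c ^ 2 ^ (k * i) = c := by
  intro i
  induction i with
  | zero => simp
  | succ i ih =>
    have h : k * (i + 1) = k * i + k := by ring
    rw [h, ← pow_pow, ih, hc]

lemma relTr_add (k l : ℕ) (x y : F) : relTr k l (x + y) = relTr k l x + relTr k l y := by
  unfold relTr
  rw [← Finset.sum_add_distrib]
  exact Finset.sum_congr rfl fun i _ => add_pow_char_pow ..

lemma relTr_zero (k l : ℕ) : relTr k l (0 : F) = 0 := by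
  unfold relTr
  exact Finset.sum_eq_zero fun i _ => zero_pow (Nat.two_pow_pos _).ne'

lemma relTr_smul (k l : ℕ) (c z : F) (hc : c ^ 2 ^ k = c) :
    relTr k l (c * z) = c * relTr k l z := by
  unfold relTr
  rw [Finset.mul_sum]
  refine Finset.sum_congr rfl fun i _ => ?_
  rw [mul_pow, fixed_pow_mul c k hc i]

lemma relTr_sq (k l : ℕ) (x : F) : relTr k l (x ^ 2) = (relTr k l x) ^ 2 := by
  unfold relTr
  rw [sum_pow_char (p := 2)]
  refine Finset.sum_congr rfl fun i _ => ?_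
  rw [← pow_mul, ← pow_mul, mul_comm]

lemma relTr_trans (r m t : ℕ) (hr : 0 < r) (hmt : m = t * r) (z : F) :
    relTr 1 r (relTr r m z) = relTr 1 m z := by
  have hmr : m / r = t := by rw [hmt]; exact Nat.mul_div_cancel t hr
  unfold relTr
  rw [Nat.div_one, Nat.div_one, hmr]
  simp only [one_mul]
  have hstep : ∀ j, (∑ i ∈ Finset.range t, z ^ 2 ^ (r * i)) ^ 2 ^ j
      = ∑ i ∈ Finset.range t, z ^ 2 ^ (r * i + j) := by
    intro j
    rw [sum_pow_char_pow (p := 2)]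
    exact Finset.sum_congr rfl fun i _ => pow_pow z (r * i) j
  rw [Finset.sum_congr rfl fun j _ => hstep j]
  rw [← Finset.sum_product']
  refine Finset.sum_nbij' (fun p => r * p.2 + p.1) (fun k => (k % r, k / r)) ?_ ?_ ?_ ?_ ?_
  · rintro ⟨j, i⟩ hp
    simp only [Finset.mem_product, Finset.mem_range] at hp
    obtain ⟨hj, hi⟩ := hp
    simp only [Finset.mem_range]
    calc r * i + j < r * i + r := by omega
      _ = r * (i + 1) := by ring
      _ ≤ r * t := Nat.mul_le_mul_left r (by omega)
      _ = m := by rw [hmt, mul_comm]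
  · intro k hk
    simp only [Finset.mem_range] at hk
    simp only [Finset.mem_product, Finset.mem_range]
    constructor
    · exact Nat.mod_lt _ hr
    · rw [Nat.div_lt_iff_lt_mul hr]
      calc k < m := hk
        _ = t * r := hmt
  · rintro ⟨j, i⟩ hp
    simp only [Finset.mem_product, Finset.mem_range] at hp
    obtain ⟨hj, hi⟩ := hp
    have h1 : (r * i + j) % r = j := by
      rw [Nat.mul_add_mod, Nat.mod_eq_of_lt hj]
    have h2 : (r * i + j) / r = i := by
      rw [Nat.mul_add_div hr, Nat.div_eq_of_lt hj, Nat.add_zero]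
    simp [h1, h2]
  · intro k _
    exact Nat.div_add_mod k r
  · rintro ⟨j, i⟩ _
    rfl

lemma relTr_artin (m : ℕ) (y : F) : relTr 1 m (y ^ 2 + y) = y ^ 2 ^ m + y := by
  unfold relTr
  rw [Nat.div_one]
  simp only [one_mul]
  have hstep : ∀ i, (y ^ 2 + y) ^ 2 ^ i
      = (fun i => y ^ 2 ^ i) (i + 1) - (fun i => y ^ 2 ^ i) i := by
    intro i
    rw [add_pow_char_pow (p := 2), CharTwo.sub_eq_add]
    congr 1
    rw [← pow_mul]
    congr 1
    rw [pow_succ]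
    ring
  rw [Finset.sum_congr rfl fun i _ => hstep i, Finset.sum_range_sub (fun i => y ^ 2 ^ i) m,
    CharTwo.sub_eq_add, pow_zero, pow_one]

lemma relTr_frob_add (r t m : ℕ) (hr : 0 < r) (hmt : m = t * r) (x : F) :
    relTr r m (x ^ 2 ^ r) + relTr r m x = x ^ 2 ^ m + x := by
  have hmr : m / r = t := by rw [hmt]; exact Nat.mul_div_cancel t hr
  unfold relTr
  rw [hmr, ← Finset.sum_add_distrib]
  have hstep : ∀ i, (x ^ 2 ^ r) ^ 2 ^ (r * i) + x ^ 2 ^ (r * i)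
      = (fun i => x ^ 2 ^ (r * i)) (i + 1) - (fun i => x ^ 2 ^ (r * i)) i := by
    intro i
    rw [CharTwo.sub_eq_add]
    congr 1
    rw [pow_pow]
    congr 2
    ring
  rw [Finset.sum_congr rfl fun i _ => hstep i,
    Finset.sum_range_sub (fun i => x ^ 2 ^ (r * i)) t, CharTwo.sub_eq_add]
  congr 2
  · rw [hmt, mul_comm]
  · simp

end CharTwoLemmas

lemma addhom_card {A B : Type*} [AddGroup A] [AddGroup B] (f : A →+ B) :
    Nat.card A = Nat.card f.range * Nat.card f.ker := by
  rw [AddSubgroup.card_eq_card_quotient_mul_card_addSubgroup f.ker]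
  congr 1
  exact Nat.card_congr (QuotientAddGroup.quotientKerEquivRange f).toEquiv

end Stmt6Aux

theorem stmt6 (t r : ℕ) (ht : 0 < t) (hr : 0 < r) (m n : ℕ) (hm : m = t * r)
    (hn : n = 2 * m) (F : Type*) [Field F] [Fintype F] [DecidableEq F]
    (hF : Fintype.card F = 2 ^ n) :
    (Sset r m : Set F).ncard = 2 ^ (m - r) := by
  classical
  open Stmt6Aux Finset in
  -- characteristic 2
  have hp : CharP F (ringChar F) := ringChar.charP F
  have hm1 : 1 ≤ m := by rw [hm]; exact Nat.one_le_iff_ne_zero.mpr (by positivity)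
  have hn1 : 1 ≤ n := by omega
  have hrm : r ≤ m := by rw [hm]; exact Nat.le_mul_of_pos_left r ht
  obtain ⟨k, hkp, hk⟩ := FiniteField.card F (ringChar F)
  have hchar2 : ringChar F = 2 := by
    have h2n : (2 : ℕ) ^ n = ringChar F ^ (k : ℕ) := by rw [← hF, hk]
    have hdvd : ringChar F ∣ 2 ^ n := by
      rw [h2n]
      exact dvd_pow_self _ k.pos.ne'
    have := hkp.dvd_of_dvd_pow (hdvd)
    rcases (Nat.dvd_prime Nat.prime_two).mp this with h | h
    · exact absurd h hkp.one_lt.ne'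
    · exact h
  haveI hF2 : CharP F 2 := hchar2 ▸ hp
  -- basic facts
  have hxn : ∀ x : F, x ^ 2 ^ n = x := by
    intro x; rw [← hF]; exact FiniteField.pow_card x
  have htwo : (2 : F) = 0 := CharTwo.two_eq_zero
  have haddz : ∀ a b : F, a + b = 0 → a = b := fun a b h => (add_eq_zero_iff a b).mp h
  -- the additive map T : x ↦ x^{2^m} + x
  set Tm : F →+ F :=
    { toFun := fun x => x ^ 2 ^ m + x
      map_zero' := by
        show (0 : F) ^ 2 ^ m + 0 = 0
        rw [zero_pow (Nat.two_pow_pos m).ne', add_zero]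
      map_add' := by
        intro x y
        show (x + y) ^ 2 ^ m + (x + y) = (x ^ 2 ^ m + x) + (y ^ 2 ^ m + y)
        rw [add_pow_char_pow (p := 2)]
        ring } with hTm
  have hTm_apply : ∀ x : F, Tm x = x ^ 2 ^ m + x := fun _ => rfl
  -- range of Tm lands in K-root set
  have hrange_fix : ∀ x : F, (Tm x) ^ 2 ^ m = Tm x := by
    intro x
    rw [hTm_apply, add_pow_char_pow (p := 2), pow_pow]
    have : m + m = n := by omega
    rw [this, hxn]
    ring
  -- counting for Tm
  have hcardF : Nat.card F = 2 ^ n := by rw [Nat.card_eq_fintype_card, hF]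
  have h1 := addhom_card Tm
  have hker_set : (Tm.ker : Set F) = {x : F | x ^ 2 ^ m = x} := by
    ext x
    simp only [SetLike.mem_coe, AddMonoidHom.mem_ker, hTm_apply, Set.mem_setOf_eq]
    constructor
    · exact haddz _ _
    · intro h; rw [h, CharTwo.add_self_eq_zero]
  have hKbound : Nat.card Tm.ker ≤ 2 ^ m := by
    have hcoe : Nat.card Tm.ker = ((Tm.ker : Set F)).ncard := Nat.card_coe_set_eq _
    rw [hcoe, hker_set]
    exact card_pow_eq_le _ (by
      calc 2 = 2 ^ 1 := (pow_one 2).symm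
        _ ≤ 2 ^ m := Nat.pow_le_pow_right (by norm_num) hm1)
  have hRbound : Nat.card Tm.range ≤ 2 ^ m := by
    have hcoe : Nat.card Tm.range = ((Tm.range : Set F)).ncard := Nat.card_coe_set_eq _
    rw [hcoe]
    refine le_trans (Set.ncard_le_ncard ?_ (Set.toFinite _)) (card_pow_eq_le _ (by
      calc 2 = 2 ^ 1 := (pow_one 2).symm
        _ ≤ 2 ^ m := Nat.pow_le_pow_right (by norm_num) hm1))
    rintro y ⟨x, rfl⟩
    exact hrange_fix x
  have hKcard : Nat.card Tm.ker = 2 ^ m := by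
    have hprod : Nat.card Tm.range * Nat.card Tm.ker = 2 ^ m * 2 ^ m := by
      rw [← h1, hcardF, hn, ← pow_add]
      congr 1; omega
    refine le_antisymm hKbound ?_
    by_contra hlt
    push_neg at hlt
    have : Nat.card Tm.range * Nat.card Tm.ker < 2 ^ m * 2 ^ m :=
      Nat.mul_lt_mul_of_le_of_lt hRbound hlt (by positivity)
    omega
  -- the map g on K : x ↦ x^{2^r} + x
  set K := Tm.ker with hK
  have hKmem : ∀ x : F, x ∈ K ↔ x ^ 2 ^ m = x := by
    intro x
    rw [← SetLike.mem_coe, hker_set]; rfl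
  set g : K →+ F :=
    { toFun := fun x => (x : F) ^ 2 ^ r + (x : F)
      map_zero' := by
        show ((0 : K) : F) ^ 2 ^ r + ((0 : K) : F) = 0
        rw [AddSubgroup.coe_zero, zero_pow (Nat.two_pow_pos r).ne', add_zero]
      map_add' := by
        intro x y
        show ((x + y : K) : F) ^ 2 ^ r + ((x + y : K) : F)
          = ((x : F) ^ 2 ^ r + (x : F)) + ((y : F) ^ 2 ^ r + (y : F))
        rw [AddSubgroup.coe_add, add_pow_char_pow (p := 2)]
        ring } with hg
  have hg_apply : ∀ x : K, g x = (x : F) ^ 2 ^ r + (x : F) := fun _ => rfl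
  have h2 := addhom_card g
  -- bound on kernel of g
  have hgker : Nat.card g.ker ≤ 2 ^ r := by
    have hcoe : Nat.card g.ker = ((g.ker : Set K)).ncard := Nat.card_coe_set_eq _
    rw [hcoe]
    have himg : Set.ncard (g.ker : Set K) = Set.ncard ((↑) '' (g.ker : Set K) : Set F) :=
      (Set.ncard_image_of_injective _ Subtype.coe_injective).symm
    rw [himg]
    refine le_trans (Set.ncard_le_ncard ?_ (Set.toFinite _)) (card_pow_eq_le _ (by
      calc 2 = 2 ^ 1 := (pow_one 2).symm
        _ ≤ 2 ^ r := Nat.pow_le_pow_right (by norm_num) hr))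
    rintro y ⟨x, hx, rfl⟩
    have : g x = 0 := hx
    rw [hg_apply] at this
    exact haddz _ _ this
  -- target set S₀
  set S₀ : Set F := {x : F | x ^ 2 ^ m = x ∧ relTr r m x = 0} with hS₀
  -- range of g lands in S₀
  have hgrange : (g.range : Set F) ⊆ S₀ := by
    rintro y ⟨x, rfl⟩
    have hxK : (x : F) ^ 2 ^ m = (x : F) := (hKmem x).mp x.2
    constructor
    · rw [hg_apply, add_pow_char_pow (p := 2), pow_pow, add_comm r m, ← pow_pow, hxK]
    · rw [hg_apply, relTr_add, relTr_frob_add r t m hr hm, hxK, CharTwo.add_self_eq_zero]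
  -- trace root-set bound
  have hmr_eq : r * (t - 1) = m - r := by
    obtain ⟨s, rfl⟩ : ∃ s, t = s + 1 := ⟨t - 1, by omega⟩
    rw [hm]
    simp only [Nat.add_sub_cancel]
    rw [add_mul, one_mul, Nat.add_sub_cancel, mul_comm]
  have hS₀bound : S₀.ncard ≤ 2 ^ (m - r) := by
    have hsub : S₀ ⊆ {x : F | ∑ i ∈ Finset.range t, x ^ 2 ^ (r * i) = 0} := by
      rintro x ⟨-, hx⟩
      have hmr : m / r = t := by rw [hm]; exact Nat.mul_div_cancel t hr
      unfold relTr at hx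
      rwa [hmr] at hx
    refine le_trans (Set.ncard_le_ncard hsub (Set.toFinite _)) ?_
    rw [← hmr_eq]
    exact card_trroots_le r t hr ht
  -- lower bound on range of g
  have hgrange_card : 2 ^ (m - r) ≤ Nat.card g.range := by
    have hprod : Nat.card g.range * Nat.card g.ker = Nat.card K := h2.symm
    have hKc : Nat.card K = 2 ^ m := hKcard
    have h2m : 2 ^ m = 2 ^ (m - r) * 2 ^ r := by
      rw [← pow_add]; congr 1; omega
    by_contra hlt
    push_neg at hlt
    have : Nat.card g.range * Nat.card g.ker < 2 ^ (m - r) * 2 ^ r :=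
      Nat.mul_lt_mul_of_lt_of_le hlt hgker (by positivity)
    omega
  have hS₀ge : 2 ^ (m - r) ≤ S₀.ncard := by
    refine le_trans hgrange_card ?_
    have hcoe : Nat.card g.range = ((g.range : Set F)).ncard := Nat.card_coe_set_eq _
    rw [hcoe]
    exact Set.ncard_le_ncard hgrange (Set.toFinite _)
  have hS₀card : S₀.ncard = 2 ^ (m - r) := le_antisymm hS₀bound hS₀ge
  -- Sset = S₀
  have hSeq : (Sset r m : Set F) = S₀ := by
    ext x
    constructor
    · rintro ⟨hTr, hsfix⟩
      set s : F := x + x ^ 2 ^ m with hs_def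
      have hs0 : s = 0 := by
        by_contra hs0
        -- s is fixed by 2^m
        have hsm : s ^ 2 ^ m = s := by
          have := fixed_pow_mul s r hsfix t
          rwa [show r * t = m from by rw [hm, mul_comm]] at this
        set y : F := x * s⁻¹ with hy_def
        have hsinv : (s⁻¹) ^ 2 ^ m = s⁻¹ := by rw [inv_pow, hsm]
        have hsinvr : (s⁻¹) ^ 2 ^ r = s⁻¹ := by rw [inv_pow, hsfix]
        have hym : y ^ 2 ^ m = x ^ 2 ^ m * s⁻¹ := by
          rw [hy_def, mul_pow, hsinv]
        have hy1 : y + y ^ 2 ^ m = 1 := by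
          rw [hym, hy_def, ← add_mul, ← hs_def, mul_inv_cancel₀ hs0]
        have hy2 : y ^ 2 ^ m = y + 1 := by
          have h' : y ^ 2 ^ m = 1 - y := by
            rw [eq_sub_iff_add_eq, add_comm]; exact hy1
          rw [h', CharTwo.sub_eq_add, add_comm]
        -- norm identity
        have hc : ((s⁻¹) ^ 2) ^ 2 ^ r = (s⁻¹) ^ 2 := by
          rw [← pow_mul, mul_comm, pow_mul, hsinvr]
        have hNy : y ^ 2 + y = x ^ (2 ^ m + 1) * (s⁻¹) ^ 2 := by
          have e1 : y ^ 2 + y = y * y ^ 2 ^ m := by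
            rw [hy2]; ring
          rw [e1, hym, hy_def, pow_succ]
          ring
        -- first evaluation : trace is 1
        have e1 : relTr 1 m (y ^ 2 + y) = 1 := by
          rw [relTr_artin, hy2]
          have : y + 1 + y = 2 * y + 1 := by ring
          rw [this, htwo]; ring
        -- second evaluation : trace is 0
        have e2 : relTr 1 m (y ^ 2 + y) = 0 := by
          rw [hNy, mul_comm, ← relTr_trans r m t hr hm,
            relTr_smul r m _ _ hc, hTr, mul_zero, relTr_zero]
        rw [e1] at e2
        exact one_ne_zero e2
      have hfix : x ^ 2 ^ m = x := (haddz _ _ hs0).symm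
      refine ⟨hfix, ?_⟩
      have hxsq : x ^ (2 ^ m + 1) = x ^ 2 := by
        rw [pow_succ, hfix, sq]
      rw [hxsq, relTr_sq] at hTr
      exact pow_eq_zero_iff (two_ne_zero) |>.mp hTr
    · rintro ⟨hfix, hTr⟩
      constructor
      · rw [pow_succ, hfix, ← sq, relTr_sq, hTr]
        ring
      · rw [hfix, CharTwo.add_self_eq_zero, zero_pow (Nat.two_pow_pos r).ne']
  rw [hSeq, hS₀card]
end
end

section
/- Every element x ∈ S lies in the subfield F_{2^m}, i.e. x^{2^m} = x; moreover S = {x ∈ F_{2^m} : Tr_r^m(x) = 0}. Consequently no element of F_{2^n} \ F_{2^m} belongs to S. -/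
noncomputable section

open Finset

lemma pow_pow_aux {F : Type*} [Field F] (x : F) (a b : ℕ) :
    (x ^ 2 ^ a) ^ 2 ^ b = x ^ 2 ^ (a + b) := by
  rw [← pow_mul, ← pow_add]

lemma relTr_eq {F : Type*} [Field F] {r : ℕ} (hr : 0 < r) (t : ℕ) (z : F) :
    relTr r (t * r) z = ∑ i ∈ range t, z ^ 2 ^ (r * i) := by
  rw [relTr, Nat.mul_div_cancel _ hr]

section key
variable {F : Type*} [Field F] [CharP F 2] [Fact (Nat.Prime 2)]

lemma relTr_sq {r : ℕ} (hr : 0 < r) (t : ℕ) (x : F) :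
    relTr r (t * r) (x ^ 2) = (relTr r (t * r) x) ^ 2 := by
  rw [relTr_eq hr, relTr_eq hr, sum_pow_char 2]
  refine Finset.sum_congr rfl fun i _ => ?_
  rw [← pow_mul, ← pow_mul, mul_comm]

lemma key {t r : ℕ} (hr : 0 < r) (x : F)
    (hy : (x + x ^ 2 ^ (t * r)) ^ 2 ^ r = x + x ^ 2 ^ (t * r))
    (htr : relTr r (t * r) (x ^ (2 ^ (t * r) + 1)) = 0) :
    x ^ 2 ^ (t * r) = x := by
  have h20 : (2 : F) = 0 := CharTwo.two_eq_zero
  set m := t * r with hmm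
  set y : F := x + x ^ 2 ^ m with hydef
  set w : F := ∑ i ∈ range t, x ^ 2 ^ (r * i) with hwdef
  have hyi : ∀ i, y ^ 2 ^ (r * i) = y := by
    intro i
    induction i with
    | zero => simp
    | succ k ih =>
      have h : r * (k + 1) = r * k + r := by ring
      rw [h, ← pow_pow_aux, ih, hy]
  have hwr : w ^ 2 ^ r = w + y := by
    have h1 : w ^ 2 ^ r = ∑ i ∈ range t, x ^ 2 ^ (r * (i + 1)) := by
      rw [hwdef, sum_pow_char_pow 2 r]
      refine Finset.sum_congr rfl fun i _ => ?_
      rw [pow_pow_aux]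
      ring_nf
    rw [h1]
    have h2 := Finset.sum_range_succ' (fun i => x ^ 2 ^ (r * i)) t
    rw [Finset.sum_range_succ] at h2
    have hmt : r * t = m := by rw [hmm]; ring
    rw [hmt] at h2
    rw [hydef, hwdef]
    linear_combination -h2 - x * h20
  have hxm : x ^ (2 ^ m + 1) = x ^ 2 + x * y := by
    rw [pow_add, pow_one, hydef]
    linear_combination -x ^ 2 * h20
  have htr2 : w ^ 2 + y * w = 0 := by
    rw [relTr_eq hr, hxm] at htr
    have h3 : ∀ i ∈ range t, (x ^ 2 + x * y) ^ 2 ^ (r * i)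
        = (x ^ 2 ^ (r * i)) ^ 2 + y * x ^ 2 ^ (r * i) := by
      intro i _
      rw [add_pow_char_pow, mul_pow, hyi]
      congr 1
      · rw [← pow_mul, ← pow_mul]; ring_nf
      · ring
    rw [Finset.sum_congr rfl h3, Finset.sum_add_distrib, ← Finset.mul_sum, ← hwdef,
      ← sum_pow_char 2, ← hwdef] at htr
    exact htr
  have hy0 : y = 0 := by
    have hfac : w * (w + y) = 0 := by linear_combination htr2
    rcases mul_eq_zero.mp hfac with h | h
    · rw [h] at hwr
      simpa using hwr.symm
    · have hw : w = y := by linear_combination h - y * h20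
      rw [hw, hy] at hwr
      linear_combination -hwr
  rw [hydef] at hy0
  linear_combination hy0 - x * h20

end key

theorem stmt7 (t r : ℕ) (ht : 0 < t) (hr : 0 < r) (m n : ℕ) (hm : m = t * r)
    (hn : n = 2 * m) (F : Type*) [Field F] [Fintype F] [DecidableEq F]
    (hF : Fintype.card F = 2 ^ n) :
    (∀ x ∈ (Sset r m : Set F), x ^ 2 ^ m = x) ∧
    (Sset r m : Set F) = {x : F | x ^ 2 ^ m = x ∧ relTr r m x = 0} ∧
    (∀ x : F, x ^ 2 ^ m ≠ x → x ∉ (Sset r m : Set F)) := by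
  haveI : Fact (Nat.Prime 2) := ⟨by norm_num⟩
  have hn0 : n ≠ 0 := by subst hn hm; positivity
  have h20 : (2 : F) = 0 := by
    have hcast : (Fintype.card F : F) = 0 := Nat.cast_card_eq_zero F
    rw [hF] at hcast
    push_cast at hcast
    exact pow_eq_zero_iff hn0 |>.mp hcast
  haveI : CharP F 2 := CharTwo.of_one_ne_zero_of_two_eq_zero one_ne_zero h20
  subst hm
  have main : ∀ x ∈ (Sset r (t * r) : Set F), x ^ 2 ^ (t * r) = x := by
    intro x hx
    exact key hr x hx.2 hx.1
  have hset : (Sset r (t * r) : Set F)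
      = {x : F | x ^ 2 ^ (t * r) = x ∧ relTr r (t * r) x = 0} := by
    ext x
    constructor
    · intro hx
      have hfix := main x hx
      refine ⟨hfix, ?_⟩
      have h1 : x ^ (2 ^ (t * r) + 1) = x ^ 2 := by
        rw [pow_add, pow_one, hfix]; ring
      have h2 := hx.1
      rw [h1, relTr_sq hr] at h2
      exact pow_eq_zero_iff (by norm_num) |>.mp h2
    · rintro ⟨hfix, htr⟩
      constructor
      · have h1 : x ^ (2 ^ (t * r) + 1) = x ^ 2 := by
          rw [pow_add, pow_one, hfix]; ring
        rw [h1, relTr_sq hr, htr]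
        ring
      · rw [hfix, CharTwo.add_self_eq_zero]
        exact zero_pow (by positivity)
  exact ⟨main, hset, fun x hx hmem => hx (main x hmem)⟩
end
end

section
/- Let a' ∈ F_{2^m} be nonzero and b₂ ∈ F_{2^m} be nonzero. Then the number N of elements u of the unit circle U = {u ∈ F_{2^n} : u^{2^m+1} = 1} satisfying a' + b₂·(u + u^{2^m}) = 0 is either 0 or 2. -/
theorem stmt11 (m n : ℕ) (hm : 0 < m) (hn : n = 2 * m)
    (F : Type*) [Field F] [Fintype F] (hF : Fintype.card F = 2 ^ n)
    (a' b₂ : F) (ha' : a' ^ 2 ^ m = a') (ha'0 : a' ≠ 0)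
    (hb₂ : b₂ ^ 2 ^ m = b₂) (hb₂0 : b₂ ≠ 0) :
    {u : F | u ^ (2 ^ m + 1) = 1 ∧ a' + b₂ * (u + u ^ 2 ^ m) = 0}.ncard = 0 ∨
    {u : F | u ^ (2 ^ m + 1) = 1 ∧ a' + b₂ * (u + u ^ 2 ^ m) = 0}.ncard = 2 := by
  have h2 : (2 : F) = 0 := by
    have h := FiniteField.cast_card_eq_zero F
    rw [hF] at h
    push_cast at h
    have hn0 : n ≠ 0 := by omega
    exact (pow_eq_zero_iff hn0).mp h
  set S := {u : F | u ^ (2 ^ m + 1) = 1 ∧ a' + b₂ * (u + u ^ 2 ^ m) = 0} with hSdef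
  have hmem : ∀ w ∈ S, w ≠ 0 ∧ w ^ 2 ^ m = w⁻¹ ∧ b₂ * w ^ 2 + a' * w + b₂ = 0 := by
    rintro w ⟨hw1, hw2⟩
    have hw0 : w ≠ 0 := by
      rintro rfl
      simp at hw1
    have hwi : w ^ 2 ^ m = w⁻¹ := by
      rw [pow_succ] at hw1
      field_simp
      exact hw1
    refine ⟨hw0, hwi, ?_⟩
    rw [hwi] at hw2
    have hinv := mul_inv_cancel₀ hw0
    linear_combination w * hw2 - b₂ * hinv
  rcases Set.eq_empty_or_nonempty S with hS | ⟨u, hu⟩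
  · left; rw [hS]; simp
  · right
    obtain ⟨hu0, hui, huq⟩ := hmem u hu
    have huinv : u⁻¹ ∈ S := by
      constructor
      · rw [inv_pow, hu.1, inv_one]
      · have h5 : (u⁻¹) ^ 2 ^ m = u := by rw [inv_pow, hui, inv_inv]
        have h6 := hu.2
        rw [hui] at h6
        rw [h5]
        linear_combination h6
    have hne : u ≠ u⁻¹ := by
      intro heq
      have hsq : u ^ 2 = 1 := by
        have := mul_inv_cancel₀ hu0
        rw [← heq] at this
        linear_combination this
      have hu1 : u = 1 := by
        have h7 : (u - 1) ^ 2 = 0 := by linear_combination hsq - u * h2 + h2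
        have h9 := pow_eq_zero_iff (two_ne_zero) |>.mp h7
        linear_combination h9
      apply ha'0
      have h8 := hu.2
      rw [hu1, one_pow] at h8
      linear_combination h8 - b₂ * h2
    have hSeq : S = {u, u⁻¹} := by
      ext w
      simp only [Set.mem_insert_iff, Set.mem_singleton_iff]
      constructor
      · intro hw
        obtain ⟨hw0, hwi, hwq⟩ := hmem w hw
        by_cases hwu : w = u
        · exact Or.inl hwu
        · right
          have key : (w - u) * (b₂ * (w + u) + a') = 0 := by linear_combination hwq - huq
          have h3 : b₂ * (w + u) + a' = 0 := by
            rcases mul_eq_zero.mp key with h | h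
            · exact absurd (sub_eq_zero.mp h) hwu
            · exact h
          have h4 : b₂ * (1 - u * w) = 0 := by linear_combination huq - u * h3
          have h5 : u * w = 1 := by
            rcases mul_eq_zero.mp h4 with h | h
            · exact absurd h hb₂0
            · linear_combination -h
          exact eq_inv_of_mul_eq_one_right (by linear_combination h5)
      · rintro (rfl | rfl)
        · exact hu
        · exact huinv
    rw [hSeq, Set.ncard_pair hne]
end

section
/- For any a₁, a₂ ∈ F_{2^r} with a₁ ≠ a₂ and any b₁, b₂ ∈ F_{2^n}, write a = a₁ + a₂, a' = a^{2^(m-1)}, and b = b₁ + b₂ = β₁·β₂ with β₁ in the unit circle U and β₂ ∈ F_{2^m} (β₂ ≠ 0 when b ≠ 0; the case b = 0 gives N = 0 solutions), and let N be the number of u ∈ U with a' + β₂·(β₁u + (β₁u)^{2^m}) = 0. Then ⟨B_{a₁,b₁}, B_{a₂,b₂}⟩ = −1/2^m if N = 0, and ⟨B_{a₁,b₁}, B_{a₂,b₂}⟩ = 1/2^m if N = 2. -/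
noncomputable section

/-!
Write `q = 2^m`, `a = a₁ + a₂`, `b = b₁ + b₂`. All traces in the exponents lie in `F₂`, so the
coordinatewise product of the two vectors is `q⁻² (-1)^(Tr_m(a x^(q+1)) + Tr_n(b x))`. Since
`gcd(q + 1, q - 1) = 1`, every nonzero `x` is uniquely `u y` with `u^(q+1) = 1` and `y ∈ F_q^×`.
Then `x^(q+1) = y²` and `Tr_n(b x) = Tr_m((b u + (b u)^q) y)`, so with `a' = √a` the exponent is
`Tr_m(c_u y)` where `c_u = a' + b u + (b u)^q ∈ F_q`. The sum of `(-1)^(Tr_m(c y))` over `y ∈ F_q`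
is `q` if `c = 0` and `0` otherwise, hence the whole sum is `1 + ∑_u (q [c_u = 0] - 1) = q N - q`
and the inner product is `(N - 1) / q`.
-/

open Finset Polynomial

theorem Nat.two_pow_two_mul_sub_one (m : ℕ) : 2 ^ (2 * m) - 1 = (2 ^ m + 1) * (2 ^ m - 1) := by
  rw [pow_mul', ← Nat.sq_sub_sq, one_pow]

theorem Nat.coprime_two_pow_add_one_two_pow_sub_one {m : ℕ} (hm : 0 < m) :
    (2 ^ m + 1).Coprime (2 ^ m - 1) := by
  have h1 : 1 ≤ 2 ^ m := Nat.one_le_two_pow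
  rw [show 2 ^ m + 1 = 2 + 1 * (2 ^ m - 1) by omega, Nat.coprime_add_mul_right_left,
    Nat.coprime_two_left]
  exact Nat.Even.sub_odd h1 (Nat.even_pow.2 ⟨even_two, hm.ne'⟩) odd_one

theorem pow_pow_mul_eq_self {M : Type*} [Monoid M] {x : M} {p r : ℕ} (h : x ^ p ^ r = x)
    (t : ℕ) : x ^ p ^ (t * r) = x := by
  induction t with
  | zero => simp
  | succ t ih => rw [add_one_mul, pow_add, pow_mul, ih, h]

section RootsOfUnity

variable {F : Type*} [Field F] [Fintype F]

theorem card_nthRootsFinset_one_of_dvd {d : ℕ} (hd : d ∣ Fintype.card F - 1) :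
    #(nthRootsFinset d (1 : F)) = d := by
  classical
  have hd0 : 0 < d := Nat.pos_of_dvd_of_pos hd (Nat.sub_pos_of_lt Fintype.one_lt_card)
  obtain ⟨ζ, hζ⟩ : ∃ ζ : Fˣ, orderOf ζ = d := by
    have hcard :=
      IsCyclic.card_orderOf_eq_totient (α := Fˣ) (d := d) (by rwa [Fintype.card_units])
    obtain ⟨ζ, hζ⟩ := Finset.card_pos.1 (hcard ▸ Nat.totient_pos.2 hd0)
    exact ⟨ζ, (mem_filter.1 hζ).2⟩
  exact (IsPrimitiveRoot.coe_units_iff.2 (hζ ▸ IsPrimitiveRoot.orderOf ζ)).card_nthRootsFinset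

theorem filter_pow_eq_self_eq_insert_zero [DecidableEq F] {k : ℕ} (hk : 2 ≤ k) :
    ({y : F | y ^ k = y} : Finset F) = insert 0 (nthRootsFinset (k - 1) (1 : F)) := by
  ext y
  simp only [mem_filter, mem_univ, true_and, mem_insert, mem_nthRootsFinset (by omega : 0 < k - 1)]
  rcases eq_or_ne y 0 with rfl | hy
  · simp [zero_pow (by omega : k ≠ 0)]
  · rw [show y ^ k = y ^ (k - 1) * y by rw [← pow_succ, Nat.sub_add_cancel (by omega)]]
    simp [hy]

theorem card_filter_pow_eq_self [DecidableEq F] {k : ℕ} (hk : k - 1 ∣ Fintype.card F - 1) :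
    #{y : F | y ^ k = y} = k := by
  have hk2 : 2 ≤ k := by
    have := Nat.pos_of_dvd_of_pos hk (Nat.sub_pos_of_lt Fintype.one_lt_card)
    omega
  rw [filter_pow_eq_self_eq_insert_zero hk2, card_insert_of_notMem,
    card_nthRootsFinset_one_of_dvd hk]
  · omega
  · exact fun h => ne_zero_of_mem_nthRootsFinset one_ne_zero h rfl

/-- Since the two groups of roots of unity meet trivially, multiplication identifies their
product with the nonzero elements. -/
theorem sum_eq_add_sum_nthRootsFinset_mul [DecidableEq F] {M : Type*} [AddCommMonoid M]
    {d₁ d₂ : ℕ} (hcop : d₁.Coprime d₂) (hcard : Fintype.card F - 1 = d₁ * d₂) (f : F → M) :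
    ∑ x, f x =
      f 0 + ∑ u ∈ nthRootsFinset d₁ (1 : F), ∑ y ∈ nthRootsFinset d₂ (1 : F), f (u * y) := by
  have hd₁ : 0 < d₁ := Nat.pos_of_dvd_of_pos (Dvd.intro _ hcard.symm)
    (Nat.sub_pos_of_lt Fintype.one_lt_card)
  have hd₂ : 0 < d₂ := Nat.pos_of_dvd_of_pos (Dvd.intro_left _ hcard.symm)
    (Nat.sub_pos_of_lt Fintype.one_lt_card)
  set U := nthRootsFinset d₁ (1 : F)
  set Y := nthRootsFinset d₂ (1 : F)
  have hinj : Set.InjOn (fun p : F × F => p.1 * p.2) (U ×ˢ Y : Finset (F × F)) := by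
    rintro ⟨u, y⟩ hp ⟨u', y'⟩ hp' h
    obtain ⟨hu, hy⟩ := mem_product.1 hp
    obtain ⟨hu', hy'⟩ := mem_product.1 hp'
    simp only [U, Y, mem_nthRootsFinset hd₁, mem_nthRootsFinset hd₂] at hu hy hu' hy' h
    have hu'0 : u' ≠ 0 := by rintro rfl; simp [hd₁.ne'] at hu'
    have hy0 : y ≠ 0 := by rintro rfl; simp [hd₂.ne'] at hy
    have hw : u / u' = y' / y := by rw [div_eq_div_iff hu'0 hy0, h, mul_comm]
    have hw1 : u / u' = 1 := by
      rw [← pow_one (u / u'), ← hcop.gcd_eq_one, pow_gcd_eq_one]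
      refine ⟨by rw [div_pow, hu, hu', div_one], by rw [hw, div_pow, hy, hy', div_one]⟩
    obtain rfl : u = u' := (div_eq_one_iff_eq hu'0).1 hw1
    obtain rfl : y = y' := mul_left_cancel₀ hu'0 h
    rfl
  have himage : (U ×ˢ Y).image (fun p => p.1 * p.2) = univ.erase 0 := by
    refine eq_of_subset_of_card_le (fun x hx => ?_) ?_
    · obtain ⟨⟨u, y⟩, hp, rfl⟩ := mem_image.1 hx
      obtain ⟨hu, hy⟩ := mem_product.1 hp
      exact mem_erase.2 ⟨mul_ne_zero (ne_zero_of_mem_nthRootsFinset one_ne_zero hu)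
        (ne_zero_of_mem_nthRootsFinset one_ne_zero hy), mem_univ _⟩
    · rw [card_erase_of_mem (mem_univ _), card_image_of_injOn hinj, card_product,
        card_nthRootsFinset_one_of_dvd (Dvd.intro _ hcard.symm),
        card_nthRootsFinset_one_of_dvd (Dvd.intro_left _ hcard.symm), card_univ, hcard]
  rw [← add_sum_erase univ f (mem_univ 0), ← himage, sum_image hinj, sum_product]

end RootsOfUnity

section Trace

variable {F : Type*} [Field F]

theorem relTr_one_s12 (l : ℕ) (x : F) : relTr 1 l x = ∑ i ∈ range l, x ^ 2 ^ i := by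
  simp [relTr]

theorem relTr_zero (l : ℕ) : relTr 1 l (0 : F) = 0 := by
  simp [relTr_one_s12]

theorem relTr_add [CharP F 2] (l : ℕ) (x y : F) :
    relTr 1 l (x + y) = relTr 1 l x + relTr 1 l y := by
  simp only [relTr_one_s12, ← sum_add_distrib, add_pow_char_pow]

theorem relTr_two_mul (l : ℕ) (x : F) :
    relTr 1 (2 * l) x = relTr 1 l x + relTr 1 l (x ^ 2 ^ l) := by
  simp only [relTr_one_s12, two_mul, sum_range_add, ← pow_mul, ← pow_add]

theorem sum_range_pow_two_pow_succ {l : ℕ} {x : F} (hx : x ^ 2 ^ l = x) :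
    ∑ i ∈ range l, x ^ 2 ^ (i + 1) = ∑ i ∈ range l, x ^ 2 ^ i := by
  have h := sum_range_succ' (fun i => x ^ 2 ^ i) l
  rwa [sum_range_succ, hx, pow_zero, pow_one, add_left_inj, eq_comm] at h

theorem relTr_sq_s12 [CharP F 2] {l : ℕ} {x : F} (hx : x ^ 2 ^ l = x) :
    relTr 1 l x ^ 2 = relTr 1 l x := by
  simp only [relTr_one_s12, sum_pow_char, ← pow_mul, ← pow_succ, sum_range_pow_two_pow_succ hx]

theorem relTr_pow_two [CharP F 2] {l : ℕ} {x : F} (hx : x ^ 2 ^ l = x) :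
    relTr 1 l (x ^ 2) = relTr 1 l x := by
  simp only [relTr_one_s12, ← pow_mul, ← pow_succ', sum_range_pow_two_pow_succ hx]

theorem card_filter_relTr_eq_zero_le [Fintype F] [DecidableEq F] (l : ℕ) :
    #{x : F | relTr 1 (l + 1) x = 0} ≤ 2 ^ l := by
  set P : F[X] := ∑ i ∈ range l, X ^ 2 ^ i + X ^ 2 ^ l
  have hlt : (∑ i ∈ range l, (X : F[X]) ^ 2 ^ i).degree < (X ^ 2 ^ l : F[X]).degree := by
    refine degree_lt_degree ((natDegree_sum_le_of_forall_le _ _ (n := 2 ^ l - 1)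
      fun i hi => ?_).trans_lt ?_)
    · rw [natDegree_X_pow]
      have := Nat.pow_lt_pow_right one_lt_two (mem_range.1 hi)
      omega
    · rw [natDegree_X_pow]; exact Nat.sub_lt Nat.one_le_two_pow one_pos
  have hP : P.Monic := (monic_X_pow _).add_of_right hlt
  have hdeg : P.natDegree = 2 ^ l := by
    rw [natDegree_add_eq_right_of_degree_lt hlt, natDegree_X_pow]
  refine hdeg ▸ card_le_degree_of_subset_roots fun x hx => ?_
  rw [mem_roots hP.ne_zero, IsRoot, eval_add, eval_finsetSum]
  simpa [relTr_one_s12, sum_range_succ] using (mem_filter.1 hx).2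

theorem relTr_mul_pow_two_pow_add_one [CharP F 2] {m : ℕ} (hm : 0 < m)
    {a u y : F} (ha : a ^ 2 ^ m = a) (hu : u ^ (2 ^ m + 1) = 1) (hy : y ^ 2 ^ m = y) (b : F) :
    relTr 1 m (a * (u * y) ^ (2 ^ m + 1)) + relTr 1 (2 * m) (b * (u * y)) =
      relTr 1 m ((a ^ 2 ^ (m - 1) + (b * u + (b * u) ^ 2 ^ m)) * y) := by
  have ha' : a ^ 2 ^ (m - 1) * a ^ 2 ^ (m - 1) = a := by
    rw [← pow_add, ← two_mul, ← pow_succ', Nat.sub_add_cancel hm, ha]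
  have ha'y : (a ^ 2 ^ (m - 1) * y) ^ 2 ^ m = a ^ 2 ^ (m - 1) * y := by
    rw [mul_pow, ← pow_mul, mul_comm (2 ^ (m - 1)), pow_mul, ha, hy]
  have hquad : a * (u * y) ^ (2 ^ m + 1) = (a ^ 2 ^ (m - 1) * y) ^ 2 := by
    rw [mul_pow, hu, one_mul, pow_succ, hy, mul_pow, sq (a ^ _), ha', sq]
  have hlin : (b * (u * y)) ^ 2 ^ m = (b * u) ^ 2 ^ m * y := by
    rw [← mul_assoc, mul_pow, hy]
  rw [hquad, relTr_pow_two ha'y, relTr_two_mul, hlin, ← relTr_add, ← relTr_add]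
  ring_nf

end Trace

section CharacterSum

variable {F : Type*} [Field F] [DecidableEq F]

theorem sgn_zero : sgn (0 : F) = 1 := if_pos rfl

theorem sgn_one : sgn (1 : F) = -1 := if_neg one_ne_zero

theorem sgn_add_s12 [CharP F 2] {u v : F} (hu : u ^ 2 = u) (hv : v ^ 2 = v) :
    sgn (u + v) = sgn u * sgn v := by
  rcases IsIdempotentElem.iff_eq_zero_or_one.1 ((sq u).symm.trans hu) with rfl | rfl <;>
    rcases IsIdempotentElem.iff_eq_zero_or_one.1 ((sq v).symm.trans hv) with rfl | rfl <;>
    simp [sgn_zero, sgn_one, CharTwo.add_self_eq_zero]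

variable [Fintype F] {m : ℕ}

theorem exists_pow_eq_self_relTr_ne_zero (hm : 0 < m)
    (hY : #{y : F | y ^ 2 ^ m = y} = 2 ^ m) : ∃ z : F, z ^ 2 ^ m = z ∧ relTr 1 m z ≠ 0 := by
  obtain ⟨l, rfl⟩ := Nat.exists_eq_succ_of_ne_zero hm.ne'
  have hlt : #{x : F | relTr 1 (l + 1) x = 0} < #{y : F | y ^ 2 ^ (l + 1) = y} := by
    rw [hY]; exact (card_filter_relTr_eq_zero_le l).trans_lt (Nat.pow_lt_pow_succ one_lt_two)
  obtain ⟨z, hz, hz0⟩ := exists_mem_notMem_of_card_lt_card hlt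
  simp only [mem_filter, mem_univ, true_and] at hz hz0
  exact ⟨z, hz, hz0⟩

/-- Translating by an element `y₀` with `Tr(c y₀) = 1` flips every sign. -/
theorem sum_sgn_relTr_mul [CharP F 2] (hm : 0 < m) (hY : #{y : F | y ^ 2 ^ m = y} = 2 ^ m)
    {c : F} (hc : c ^ 2 ^ m = c) :
    ∑ y ∈ {y : F | y ^ 2 ^ m = y}, sgn (relTr 1 m (c * y)) = if c = 0 then 2 ^ m else 0 := by
  split_ifs with hc0
  · simp [hc0, relTr_zero, sgn_zero, hY]
  obtain ⟨z, hz, hz0⟩ := exists_pow_eq_self_relTr_ne_zero hm hY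
  have hz1 : relTr 1 m z = 1 :=
    (IsIdempotentElem.iff_eq_zero_or_one.1 ((sq _).symm.trans (relTr_sq_s12 hz))).resolve_left hz0
  have hy₀ : (z / c) ^ 2 ^ m = z / c := by rw [div_pow, hz, hc]
  have hy₀0 : z / c ≠ 0 := div_ne_zero (by rintro rfl; exact hz0 (relTr_zero m)) hc0
  refine sum_involution (fun y _ => y + z / c) (fun y hy => ?_)
    (fun y _ _ => by simpa using hy₀0) (fun y hy => ?_)
    (fun y _ => by rw [add_assoc, CharTwo.add_self_eq_zero, add_zero])
  · have hcy : (c * y) ^ 2 ^ m = c * y := by rw [mul_pow, hc, (mem_filter.1 hy).2]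
    rw [mul_add, mul_div_cancel₀ z hc0, relTr_add, hz1, sgn_add_s12 (relTr_sq_s12 hcy) (one_pow 2),
      sgn_one, mul_neg_one, add_neg_cancel]
  · simp only [mem_filter, mem_univ, true_and] at hy ⊢
    rw [add_pow_char_pow, hy, hy₀]

end CharacterSum

section QuadraticExtension

variable {F : Type*} [Field F] [Fintype F] {m : ℕ}

theorem pos_of_card_eq_two_pow_two_mul (hF : Fintype.card F = 2 ^ (2 * m)) : 0 < m := by
  refine Nat.pos_of_ne_zero fun h0 => ?_
  have := (Fintype.one_lt_card (α := F)).ne'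
  simp_all

theorem pow_two_pow_two_mul_eq_self (hF : Fintype.card F = 2 ^ (2 * m)) (x : F) :
    x ^ 2 ^ (2 * m) = x :=
  hF ▸ FiniteField.pow_card x

theorem pow_two_pow_add_one_pow_two_pow (hF : Fintype.card F = 2 ^ (2 * m)) (x : F) :
    (x ^ (2 ^ m + 1)) ^ 2 ^ m = x ^ (2 ^ m + 1) := by
  rw [← pow_mul, add_one_mul, ← pow_add 2, ← two_mul, pow_add, pow_two_pow_two_mul_eq_self hF,
    ← pow_succ']

variable [DecidableEq F] [CharP F 2]

theorem sum_sgn_relTr_quadratic (hF : Fintype.card F = 2 ^ (2 * m)) {a : F}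
    (ha : a ^ 2 ^ m = a) (b : F) :
    ∑ x : F, sgn (relTr 1 m (a * x ^ (2 ^ m + 1)) + relTr 1 (2 * m) (b * x)) =
      2 ^ m * #{u ∈ nthRootsFinset (2 ^ m + 1) (1 : F) |
        a ^ 2 ^ (m - 1) + (b * u + (b * u) ^ 2 ^ m) = 0} - 2 ^ m := by
  have hm := pos_of_card_eq_two_pow_two_mul hF
  have hq : 2 ≤ 2 ^ m := Nat.le_self_pow hm.ne' 2
  have hcard : Fintype.card F - 1 = (2 ^ m + 1) * (2 ^ m - 1) :=
    hF ▸ Nat.two_pow_two_mul_sub_one m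
  have hsub : ({y : F | y ^ 2 ^ m = y} : Finset F) = insert 0 (nthRootsFinset (2 ^ m - 1) 1) :=
    filter_pow_eq_self_eq_insert_zero hq
  have hY : #{y : F | y ^ 2 ^ m = y} = 2 ^ m :=
    card_filter_pow_eq_self (hcard ▸ Dvd.intro_left _ rfl)
  have inner : ∀ u ∈ nthRootsFinset (2 ^ m + 1) (1 : F),
      ∑ y ∈ nthRootsFinset (2 ^ m - 1) (1 : F),
        sgn (relTr 1 m (a * (u * y) ^ (2 ^ m + 1)) + relTr 1 (2 * m) (b * (u * y))) =
      (if a ^ 2 ^ (m - 1) + (b * u + (b * u) ^ 2 ^ m) = 0 then 2 ^ m else 0) - 1 := by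
    intro u hu
    set c := a ^ 2 ^ (m - 1) + (b * u + (b * u) ^ 2 ^ m)
    have hc : c ^ 2 ^ m = c := by
      rw [add_pow_char_pow, add_pow_char_pow, ← pow_mul, mul_comm, pow_mul, ha, ← pow_mul,
        ← pow_add, ← two_mul, pow_two_pow_two_mul_eq_self hF, add_comm ((b * u) ^ 2 ^ m)]
    have hsum := sum_sgn_relTr_mul hm hY hc
    rw [hsub, sum_insert (fun h => ne_zero_of_mem_nthRootsFinset one_ne_zero h rfl), mul_zero,
      relTr_zero, sgn_zero] at hsum
    rw [← hsum, add_sub_cancel_left]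
    refine sum_congr rfl fun y hy => ?_
    have hyY : y ∈ ({y : F | y ^ 2 ^ m = y} : Finset F) := hsub ▸ mem_insert_of_mem hy
    rw [relTr_mul_pow_two_pow_add_one hm ha ((mem_nthRootsFinset (by omega) _).1 hu)
      (mem_filter.1 hyY).2]
  rw [sum_eq_add_sum_nthRootsFinset_mul (Nat.coprime_two_pow_add_one_two_pow_sub_one hm) hcard,
    sum_congr rfl inner, sum_sub_distrib, sum_ite, sum_const_zero, sum_const, sum_const,
    card_nthRootsFinset_one_of_dvd (hcard ▸ Dvd.intro _ rfl)]
  simp only [zero_pow (by omega : 2 ^ m + 1 ≠ 0), mul_zero, relTr_zero, add_zero, sgn_zero,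
    nsmul_eq_mul, mul_one]
  push_cast
  ring

end QuadraticExtension

theorem Bvec_mul_Bvec {F : Type*} [Field F] [Fintype F] [DecidableEq F] [CharP F 2] {m : ℕ}
    (hF : Fintype.card F = 2 ^ (2 * m)) {a₁ a₂ : F} (ha₁ : a₁ ^ 2 ^ m = a₁)
    (ha₂ : a₂ ^ 2 ^ m = a₂) (b₁ b₂ x : F) :
    Bvec m (2 * m) a₁ b₁ x * Bvec m (2 * m) a₂ b₂ x = (1 / 2 ^ m) ^ 2 *
      sgn (relTr 1 m ((a₁ + a₂) * x ^ (2 ^ m + 1)) + relTr 1 (2 * m) ((b₁ + b₂) * x)) := by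
  have hA {a : F} (ha : a ^ 2 ^ m = a) : relTr 1 m (a * x ^ (2 ^ m + 1)) ^ 2 = _ :=
    relTr_sq_s12 (by rw [mul_pow, ha, pow_two_pow_add_one_pow_two_pow hF])
  have hB (b : F) : relTr 1 (2 * m) (b * x) ^ 2 = _ := relTr_sq_s12 (pow_two_pow_two_mul_eq_self hF _)
  have hsq {u v : F} (hu : u ^ 2 = u) (hv : v ^ 2 = v) : (u + v) ^ 2 = u + v := by
    rw [add_pow_char, hu, hv]
  rw [Bvec, Bvec, add_mul, add_mul, relTr_add, relTr_add, add_add_add_comm,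
    sgn_add_s12 (hsq (hA ha₁) (hB b₁)) (hsq (hA ha₂) (hB b₂))]
  ring

theorem stmt12_general (t r : ℕ) (m n : ℕ) (hm : m = t * r)
    (hn : n = 2 * m) (F : Type*) [Field F] [Fintype F] [DecidableEq F]
    (hF : Fintype.card F = 2 ^ n)
    (a₁ a₂ : F) (ha₁ : a₁ ^ 2 ^ r = a₁) (ha₂ : a₂ ^ 2 ^ r = a₂)
    (b₁ b₂ : F) (β₁ β₂ : F) (hβ₂ : β₂ ^ 2 ^ m = β₂)
    (hb : b₁ + b₂ = β₁ * β₂) :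
    ({u : F | u ^ (2 ^ m + 1) = 1 ∧
        (a₁ + a₂) ^ 2 ^ (m - 1) + β₂ * (β₁ * u + (β₁ * u) ^ 2 ^ m) = 0}.ncard = 0 →
      ∑ x : F, Bvec m n a₁ b₁ x * Bvec m n a₂ b₂ x = -(1 / 2 ^ m)) ∧
    ({u : F | u ^ (2 ^ m + 1) = 1 ∧
        (a₁ + a₂) ^ 2 ^ (m - 1) + β₂ * (β₁ * u + (β₁ * u) ^ 2 ^ m) = 0}.ncard = 2 →
      ∑ x : F, Bvec m n a₁ b₁ x * Bvec m n a₂ b₂ x = 1 / 2 ^ m) := by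
  subst hn
  have : CharP F 2 := charP_of_card_eq_prime_pow hF
  have ha₁' : a₁ ^ 2 ^ m = a₁ := hm ▸ pow_pow_mul_eq_self ha₁ t
  have ha₂' : a₂ ^ 2 ^ m = a₂ := hm ▸ pow_pow_mul_eq_self ha₂ t
  have ha : (a₁ + a₂) ^ 2 ^ m = a₁ + a₂ := by rw [add_pow_char_pow, ha₁', ha₂']
  have hcount : {u : F | u ^ (2 ^ m + 1) = 1 ∧
      (a₁ + a₂) ^ 2 ^ (m - 1) + β₂ * (β₁ * u + (β₁ * u) ^ 2 ^ m) = 0}.ncard =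
      #{u ∈ nthRootsFinset (2 ^ m + 1) (1 : F) |
        (a₁ + a₂) ^ 2 ^ (m - 1) + ((b₁ + b₂) * u + ((b₁ + b₂) * u) ^ 2 ^ m) = 0} := by
    have harg (u : F) :
        β₂ * (β₁ * u + (β₁ * u) ^ 2 ^ m) = (b₁ + b₂) * u + ((b₁ + b₂) * u) ^ 2 ^ m := by
      rw [hb, mul_pow, mul_pow, mul_pow, hβ₂]
      ring
    rw [← Set.ncard_coe_finset]
    congr 1
    ext u
    simp only [harg, coe_filter, mem_nthRootsFinset (Nat.succ_pos _), Set.mem_ofPred_eq]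
  rw [hcount, sum_congr rfl fun x _ => Bvec_mul_Bvec hF ha₁' ha₂' b₁ b₂ x, ← mul_sum,
    sum_sgn_relTr_quadratic hF ha]
  constructor <;> intro hN <;> rw [hN] <;> field_simp <;> ring

theorem stmt12 (t r : ℕ) (ht : 0 < t) (hr : 0 < r) (m n : ℕ) (hm : m = t * r)
    (hn : n = 2 * m) (F : Type*) [Field F] [Fintype F] [DecidableEq F]
    (hF : Fintype.card F = 2 ^ n)
    (a₁ a₂ : F) (ha₁ : a₁ ^ 2 ^ r = a₁) (ha₂ : a₂ ^ 2 ^ r = a₂) (hne : a₁ ≠ a₂)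
    (b₁ b₂ : F) (β₁ β₂ : F) (hβ₁ : β₁ ^ (2 ^ m + 1) = 1) (hβ₂ : β₂ ^ 2 ^ m = β₂)
    (hb : b₁ + b₂ = β₁ * β₂) (hβ₂0 : b₁ + b₂ ≠ 0 → β₂ ≠ 0) :
    ({u : F | u ^ (2 ^ m + 1) = 1 ∧
        (a₁ + a₂) ^ 2 ^ (m - 1) + β₂ * (β₁ * u + (β₁ * u) ^ 2 ^ m) = 0}.ncard = 0 →
      ∑ x : F, Bvec m n a₁ b₁ x * Bvec m n a₂ b₂ x = -(1 / 2 ^ m)) ∧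
    ({u : F | u ^ (2 ^ m + 1) = 1 ∧
        (a₁ + a₂) ^ 2 ^ (m - 1) + β₂ * (β₁ * u + (β₁ * u) ^ 2 ^ m) = 0}.ncard = 2 →
      ∑ x : F, Bvec m n a₁ b₁ x * Bvec m n a₂ b₂ x = 1 / 2 ^ m) :=
  stmt12_general t r m n hm hn F hF a₁ a₂ ha₁ ha₂ b₁ b₂ β₁ β₂ hβ₂ hb
end
end
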